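/- arXiv:2112.11617 — 5 statements merged into one kernel-verified Lean document; each statement's English description precedes it below -/
import Mathlib

section
/- Let b ≥ 1 and n ≥ 1 be integers, let λ ∈ ℂ, and let I : MvPolynomial (Fin b) ℂ →ₗ[ℂ] ℂ be a ℂ-linear functional satisfying the Fujiki relation with constant λ in degree 2n, i.e. I((∑_i u_i X_i)^{2n}) = λ·(∑_i u_i²)^n for every u : Fin b → ℂ. Then, with q := ∑_i X_i², for every u : Fin b → ℂ one has (2n−1)·I(q·(∑_i u_i X_i)^{2n−2}) = (b+2n−2)·λ·(∑_i u_i²)^{n−1}. (This is the computation of the constant λ_q = λ(b₂+2n−2)/(2n−1) in ∫_M q u^{2n−2} = λ_q Q(u)^{n−1} from the proof of the theorem b_{Θ^n}(M) ≥ −(b₂+2n−2)·b_{Θ^{n−2}Θ₂}(M).) -/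
open MvPolynomial

section Aux
open Finset

private lemma eval0_d2 (p : Polynomial ℂ) :
    (Polynomial.derivative (Polynomial.derivative p)).eval 0 = 2 * p.coeff 2 := by
  rw [← Polynomial.coeff_zero_eq_eval_zero]
  simp [Polynomial.coeff_derivative]; ring

private lemma key (b n : ℕ) (hn : 1 ≤ n) (lam : ℂ)
    (I : MvPolynomial (Fin b) ℂ →ₗ[ℂ] ℂ)
    (hI : ∀ u : Fin b → ℂ,
      I ((∑ i, C (u i) * X i) ^ (2 * n)) = lam * (∑ i, (u i) ^ 2) ^ n)
    (u : Fin b → ℂ) (j : Fin b) :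
    2 * (((2*n).choose 2 : ℂ) *
        I ((X j)^2 * (∑ i, C (u i) * X i) ^ (2*n-2)))
      = lam * (n * (((n-1 : ℕ) : ℂ) * (∑ i, u i ^ 2)^(n-1-1) * (2 * u j)^2
          + 2 * (∑ i, u i ^2)^(n-1))) := by
  set L : MvPolynomial (Fin b) ℂ := ∑ i, C (u i) * X i with hLdef
  set S : ℂ := ∑ i, u i ^ 2 with hSdef
  set pL : Polynomial ℂ := ∑ k ∈ Finset.range (2*n+1),
    Polynomial.C (((2*n).choose k : ℂ) * I ((X j)^k * L^(2*n-k))) * Polynomial.X^k with hpL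
  set pR : Polynomial ℂ := Polynomial.C lam *
    (Polynomial.C S + Polynomial.C (2 * u j) * Polynomial.X + Polynomial.X^2)^n with hpR
  have hpt : ∀ t : ℂ, pL.eval t = pR.eval t := by
    intro t
    have h1 : pL.eval t = I ((C t * X j + L)^(2*n)) := by
      rw [add_pow, map_sum, hpL]
      rw [Polynomial.eval_finset_sum]
      refine Finset.sum_congr rfl fun k _ => ?_
      have hc : ((2*n).choose k : MvPolynomial (Fin b) ℂ)
          = C (((2*n).choose k : ℂ)) := by simp
      have h2 : (C t * X j)^k * L^(2*n-k) * ((2*n).choose k : MvPolynomial (Fin b) ℂ)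
          = (((2*n).choose k : ℂ) * t^k) • ((X j)^k * L^(2*n-k)) := by
        rw [MvPolynomial.smul_eq_C_mul, MvPolynomial.C_mul, hc, mul_pow, MvPolynomial.C_pow]
        ring
      rw [h2, map_smul]
      simp only [Polynomial.eval_mul, Polynomial.eval_C, Polynomial.eval_pow, Polynomial.eval_X,
        smul_eq_mul]
      ring
    have hv : (∑ i, C (u i + if i = j then t else 0) * X i) = C t * X j + L := by
      simp only [MvPolynomial.C_add, add_mul, Finset.sum_add_distrib, apply_ite (MvPolynomial.C),
        MvPolynomial.C_0, ite_mul, zero_mul]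
      rw [Finset.sum_ite_eq' Finset.univ j (fun i => C t * X i)]
      simp [add_comm, hLdef]
    have hvs : (∑ i, (u i + if i = j then t else 0) ^ 2) = S + 2 * t * u j + t^2 := by
      have : ∀ i, (u i + if i = j then t else 0) ^ 2
          = u i ^ 2 + (if i = j then 2 * t * u j + t^2 else 0) := by
        intro i
        by_cases h : i = j <;> simp [h] <;> ring
      rw [Finset.sum_congr rfl fun i _ => this i, Finset.sum_add_distrib,
        Finset.sum_ite_eq' Finset.univ j (fun _ => 2 * t * u j + t^2)]
      rw [hSdef]
      simp only [Finset.mem_univ, if_true]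
      ring
    have h3 : I ((C t * X j + L)^(2*n)) = lam * (S + 2 * t * u j + t^2)^n := by
      rw [← hv, ← hvs, hI]
    rw [h1, h3, hpR]
    simp only [Polynomial.eval_mul, Polynomial.eval_pow, Polynomial.eval_add, Polynomial.eval_C,
      Polynomial.eval_X]
    ring
  have heq : pL = pR := Polynomial.funext hpt
  have hcL : pL.coeff 2 = ((2*n).choose 2 : ℂ) * I ((X j)^2 * L^(2*n-2)) := by
    rw [hpL, Polynomial.finset_sum_coeff]
    simp only [Polynomial.coeff_C_mul, Polynomial.coeff_X_pow, mul_ite, mul_one, mul_zero]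
    rw [Finset.sum_ite_eq (Finset.range (2*n+1)) 2]
    have : 2 ∈ Finset.range (2*n+1) := by
      rw [Finset.mem_range]; omega
    simp [this]
  have hcR : (Polynomial.derivative (Polynomial.derivative pR)).eval 0
      = lam * (n * (((n-1 : ℕ) : ℂ) * S^(n-1-1) * (2 * u j)^2 + 2 * S^(n-1))) := by
    rw [hpR]
    simp only [Polynomial.derivative_mul, Polynomial.derivative_pow, Polynomial.derivative_C,
      Polynomial.derivative_X, Polynomial.derivative_add, Polynomial.derivative_one,
      Polynomial.eval_mul, Polynomial.eval_add, Polynomial.eval_pow, Polynomial.eval_C,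
      Polynomial.eval_X, Polynomial.eval_zero, Polynomial.eval_one, Polynomial.eval_natCast,
      zero_mul, mul_zero, add_zero, zero_add, mul_one, one_mul]
    push_cast
    ring
  calc 2 * (((2*n).choose 2 : ℂ) * I ((X j)^2 * L^(2*n-2)))
      = 2 * pL.coeff 2 := by rw [hcL]
    _ = (Polynomial.derivative (Polynomial.derivative pL)).eval 0 := (eval0_d2 pL).symm
    _ = (Polynomial.derivative (Polynomial.derivative pR)).eval 0 := by rw [heq]
    _ = _ := hcR

end Aux

/-- The computation of the constant `λ_q = λ(b₂+2n−2)/(2n−1)` from the proof of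
`b_{Θ^n}(M) ≥ −(b₂+2n−2)·b_{Θ^{n−2}Θ₂}(M)`: if a linear functional `I` satisfies the
Fujiki relation with constant `λ` in degree `2n`, then with `q := ∑ Xᵢ²`,
`(2n−1)·I(q·(∑ uᵢXᵢ)^{2n−2}) = (b+2n−2)·λ·(∑ uᵢ²)^{n−1}` for every `u`. -/
theorem lambda_q_computation (b n : ℕ) (hb : 1 ≤ b) (hn : 1 ≤ n) (lam : ℂ)
    (I : MvPolynomial (Fin b) ℂ →ₗ[ℂ] ℂ)
    (hI : ∀ u : Fin b → ℂ,
      I ((∑ i, C (u i) * X i) ^ (2 * n)) = lam * (∑ i, (u i) ^ 2) ^ n) :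
    ∀ u : Fin b → ℂ,
      ((2 * n : ℕ) - 1 : ℂ) *
          I ((∑ i, (X i) ^ 2) * (∑ i, C (u i) * X i) ^ (2 * n - 2)) =
        ((b : ℂ) + 2 * n - 2) * lam * (∑ i, (u i) ^ 2) ^ (n - 1) := by
  intro u
  set L : MvPolynomial (Fin b) ℂ := ∑ i, C (u i) * X i with hLdef
  set S : ℂ := ∑ i, u i ^ 2 with hSdef
  have H : 2 * (((2*n).choose 2 : ℂ) * I ((∑ i, (X i)^2) * L ^ (2*n-2)))
      = lam * (n * (((n-1:ℕ):ℂ) * S^(n-1-1) * (4 * S) + 2 * b * S^(n-1))) := by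
    have h1 : I ((∑ i, (X i)^2) * L ^ (2*n-2)) = ∑ j, I ((X j)^2 * L^(2*n-2)) := by
      rw [Finset.sum_mul, map_sum]
    rw [h1, Finset.mul_sum, Finset.mul_sum]
    rw [Finset.sum_congr rfl (fun j _ => key b n hn lam I hI u j)]
    have h4S : (∑ j, (2 * u j)^2) = 4 * S := by
      rw [hSdef, Finset.mul_sum]
      exact Finset.sum_congr rfl fun j _ => by ring
    have hterm : ∀ j : Fin b, lam * (n * (((n-1:ℕ):ℂ) * S^(n-1-1) * (2 * u j)^2 + 2 * S^(n-1)))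
        = lam * n * (((n-1:ℕ):ℂ) * S^(n-1-1)) * (2 * u j)^2 + lam * n * 2 * S^(n-1) :=
      fun j => by ring
    rw [Finset.sum_congr rfl fun j _ => hterm j, Finset.sum_add_distrib, ← Finset.mul_sum, h4S,
      Finset.sum_const, Finset.card_univ, Fintype.card_fin, nsmul_eq_mul]
    ring
  obtain ⟨k, rfl⟩ : ∃ k, n = k + 1 := ⟨n - 1, by omega⟩
  have hch : (((2*(k+1)).choose 2 : ℕ) : ℂ) = ((k:ℂ)+1) * (2*(k:ℂ)+1) := by
    have h : (2*(k+1)).choose 2 = (k+1)*(2*k+1) := by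
      rw [Nat.choose_two_right]
      rw [show 2*(k+1) - 1 = 2*k+1 by omega]
      rw [show 2*(k+1)*(2*k+1) = 2*((k+1)*(2*k+1)) by ring]
      exact Nat.mul_div_cancel_left _ (by norm_num)
    rw [h]; push_cast; ring
  rw [hch] at H
  simp only [Nat.add_sub_cancel] at H ⊢
  rcases k with _ | k'
  · norm_num at H ⊢
    linear_combination H / 2
  · have hS : S^(k'+1) = S^k' * S := pow_succ S k'
    simp only [Nat.add_sub_cancel] at H
    push_cast at H ⊢
    have hne : (2 * ((k':ℂ) + 2)) ≠ 0 := by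
      have h2 : ((k'+2 : ℕ) : ℂ) ≠ 0 := Nat.cast_ne_zero.mpr (by omega)
      push_cast at h2
      exact mul_ne_zero two_ne_zero h2
    apply mul_left_cancel₀ hne
    linear_combination H - 2 * ((k':ℂ)+1) * (2 * ((k':ℂ)+2)) * lam * hS
end

section
/- Let b ≥ 1 and n ≥ 2 be integers, let λ ∈ ℂ, and let I : MvPolynomial (Fin b) ℂ →ₗ[ℂ] ℂ be a ℂ-linear functional satisfying the Fujiki relation with constant λ in degree 2n, i.e. I((∑_i u_i X_i)^{2n}) = λ·(∑_i u_i²)^n for every u : Fin b → ℂ. Then, with q := ∑_i X_i², for every u : Fin b → ℂ one has (2n−1)·(2n−3)·I(q²·(∑_i u_i X_i)^{2n−4}) = (b+2n−2)·(b+2n−4)·λ·(∑_i u_i²)^{n−2}. (This is the computation of the constant λ_{q²} = λ(b₂+2n−2)(b₂+2n−4)/((2n−1)(2n−3)) in ∫_M q² u^{2n−4} = λ_{q²} Q(u)^{n−2} from the proof of the theorem b_{Θ^n}(M) ≥ −(b₂+2n−2)·b_{Θ^{n−2}Θ₂}(M).) -/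
open MvPolynomial

section Aux

variable {b : ℕ}

/-- Apply a linear functional to the coefficients of a polynomial. -/
noncomputable def fujikiPhi (I : MvPolynomial (Fin b) ℂ →ₗ[ℂ] ℂ) :
    MvPolynomial (Fin b) (MvPolynomial (Fin b) ℂ) →ₗ[ℂ] MvPolynomial (Fin b) ℂ where
  toFun p := AddMonoidAlgebra.map I.toAddMonoidHom p
  map_add' := AddMonoidAlgebra.map_add _
  map_smul' c p := by ext; simp [coeff]

theorem fujikiPhi_coeff (I : MvPolynomial (Fin b) ℂ →ₗ[ℂ] ℂ) (p) (d : Fin b →₀ ℕ) :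
    coeff d (fujikiPhi I p) = I (coeff d p) := by
  rfl

theorem fujikiPhi_monomial (I : MvPolynomial (Fin b) ℂ →ₗ[ℂ] ℂ) (d : Fin b →₀ ℕ) (a) :
    fujikiPhi I (monomial d a) = monomial d (I a) := by
  ext e
  simp [fujikiPhi_coeff, coeff_monomial, apply_ite I]

theorem pderiv_fujikiPhi (I : MvPolynomial (Fin b) ℂ →ₗ[ℂ] ℂ) (j : Fin b) (p) :
    pderiv j (fujikiPhi I p) = fujikiPhi I (pderiv j p) := by
  induction p using MvPolynomial.induction_on' with
  | monomial d a =>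
      rw [fujikiPhi_monomial, pderiv_monomial, pderiv_monomial, fujikiPhi_monomial]
      congr 1
      rw [mul_comm a, ← nsmul_eq_mul, map_nsmul, nsmul_eq_mul, mul_comm]
  | add p q hp hq => simp only [map_add, hp, hq]

theorem eval_fujikiPhi (I : MvPolynomial (Fin b) ℂ →ₗ[ℂ] ℂ) (u : Fin b → ℂ) (p) :
    eval u (fujikiPhi I p) = I (aeval (fun i => C (u i)) p) := by
  induction p using MvPolynomial.induction_on' with
  | monomial d a =>
      rw [fujikiPhi_monomial, eval_monomial, aeval_monomial]
      have h1 : (algebraMap (MvPolynomial (Fin b) ℂ) (MvPolynomial (Fin b) ℂ)) a = a := rfl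
      rw [h1]
      have h2 : (d.prod fun i k => (fun i => (C (u i) : MvPolynomial (Fin b) ℂ)) i ^ k)
          = C (d.prod fun i k => u i ^ k) := by
        rw [Finsupp.prod, Finsupp.prod, map_prod]
        simp
      rw [h2, mul_comm a, ← smul_eq_C_mul, map_smul, smul_eq_mul, mul_comm]
  | add p q hp hq => simp only [map_add, hp, hq]

variable {R : Type*} [CommRing R]

/-- The formal Laplacian. -/
noncomputable def fujikiLap (p : MvPolynomial (Fin b) R) : MvPolynomial (Fin b) R :=
  ∑ j, pderiv j (pderiv j p)

theorem fujikiLap_C_mul (c : R) (p : MvPolynomial (Fin b) R) :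
    fujikiLap (C c * p) = C c * fujikiLap p := by
  simp [fujikiLap, pderiv_C_mul, Finset.mul_sum]

theorem fujikiLap_nsmul (m : ℕ) (p : MvPolynomial (Fin b) R) :
    fujikiLap (m • p) = m • fujikiLap p := by
  simp [fujikiLap, map_nsmul, Finset.smul_sum]

theorem fujikiLap_fujikiPhi (I : MvPolynomial (Fin b) ℂ →ₗ[ℂ] ℂ) (p) :
    fujikiLap (fujikiPhi I p) = fujikiPhi I (fujikiLap p) := by
  unfold fujikiLap
  rw [map_sum]
  exact Finset.sum_congr rfl fun j _ => by rw [pderiv_fujikiPhi, pderiv_fujikiPhi]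

theorem pderiv_lin (a : Fin b → R) (j : Fin b) :
    pderiv j (∑ i, C (a i) * X i) = C (a j) := by
  rw [map_sum, Finset.sum_eq_single j]
  · simp
  · intro i _ hij
    simp [pderiv_C_mul, pderiv_X, Pi.single_apply, hij]
  · simp

theorem pderiv_linpow (a : Fin b → R) (j : Fin b) (m : ℕ) :
    pderiv j ((∑ i, C (a i) * X i) ^ m)
      = m • (C (a j) * (∑ i, C (a i) * X i) ^ (m - 1)) := by
  rw [Derivation.leibniz_pow, pderiv_lin, smul_eq_mul, mul_comm]

theorem fujikiLap_linpow (a : Fin b → R) (k : ℕ) :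
    fujikiLap ((∑ i, C (a i) * X i) ^ (k + 2))
      = ((k + 2) * (k + 1)) • (C (∑ i, (a i) ^ 2) * (∑ i, C (a i) * X i) ^ k) := by
  unfold fujikiLap
  have h1 : ∀ j : Fin b, pderiv j (pderiv j ((∑ i, C (a i) * X i) ^ (k + 2)))
      = ((k + 2) * (k + 1)) • (C ((a j) ^ 2) * (∑ i, C (a i) * X i) ^ k) := by
    intro j
    have e1 : k + 2 - 1 = k + 1 := rfl
    have e2 : k + 1 - 1 = k := rfl
    rw [pderiv_linpow, map_nsmul, pderiv_C_mul, e1, pderiv_linpow,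
      e2, mul_smul_comm, ← smul_assoc, smul_eq_mul]
    rw [← mul_assoc, ← map_mul, ← sq]
  rw [Finset.sum_congr rfl fun j _ => h1 j, ← Finset.smul_sum]
  congr 1
  rw [← Finset.sum_mul, ← map_sum]

theorem pderiv_fujikiQ (j : Fin b) :
    pderiv j (∑ i, (X i : MvPolynomial (Fin b) R) ^ 2) = 2 * X j := by
  rw [map_sum, Finset.sum_eq_single j]
  · rw [Derivation.leibniz_pow]
    simp [two_smul]
    ring
  · intro i _ hij
    rw [Derivation.leibniz_pow]
    simp [pderiv_X, Pi.single_apply, hij.symm]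
  · simp

theorem pderiv_fujikiQpow (j : Fin b) (m : ℕ) :
    pderiv j ((∑ i, (X i : MvPolynomial (Fin b) R) ^ 2) ^ m)
      = m • ((∑ i, (X i : MvPolynomial (Fin b) R) ^ 2) ^ (m - 1) * (2 * X j)) := by
  rw [Derivation.leibniz_pow, pderiv_fujikiQ, smul_eq_mul]

theorem fujikiLap_Qpow (k : ℕ) :
    fujikiLap ((∑ i, (X i : MvPolynomial (Fin b) R) ^ 2) ^ (k + 1))
      = (2 * (k + 1) * (b + 2 * k)) • (∑ i, (X i : MvPolynomial (Fin b) R) ^ 2) ^ k := by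
  set Q : MvPolynomial (Fin b) R := ∑ i, (X i) ^ 2 with hQ
  have key : ∀ j : Fin b, pderiv j (pderiv j (Q ^ (k + 1)))
      = ((4 * (k + 1) * k) : ℕ) • (Q ^ (k - 1) * X j ^ 2) + ((2 * (k + 1)) : ℕ) • Q ^ k := by
    intro j
    have e2 : k + 1 - 1 = k := rfl
    have hXj : pderiv j ((2 : MvPolynomial (Fin b) R) * X j) = 2 := by
      rw [two_mul, map_add, pderiv_X_self]
      norm_num
    rw [pderiv_fujikiQpow, e2, map_nsmul, Derivation.leibniz, pderiv_fujikiQpow, hXj]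
    simp only [smul_eq_mul, nsmul_eq_mul, ← hQ]
    push_cast
    ring
  unfold fujikiLap
  rw [Finset.sum_congr rfl fun j _ => key j, Finset.sum_add_distrib, ← Finset.smul_sum,
    ← Finset.mul_sum, ← hQ, Finset.sum_const, Finset.card_fin, smul_smul]
  have hk : ((4 * (k + 1) * k) : ℕ) • (Q ^ (k - 1) * Q) = ((4 * (k + 1) * k) : ℕ) • Q ^ k := by
    cases k with
    | zero => simp
    | succ k => rw [Nat.succ_sub_one, ← pow_succ]
  rw [hk, ← add_nsmul]
  congr 1
  ring

end Aux

/-- The computation of the constant `λ_{q²} = λ(b₂+2n−2)(b₂+2n−4)/((2n−1)(2n−3))` from the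
proof of `b_{Θ^n}(M) ≥ −(b₂+2n−2)·b_{Θ^{n−2}Θ₂}(M)`: if a linear functional `I` satisfies
the Fujiki relation with constant `λ` in degree `2n`, then with `q := ∑ Xᵢ²`,
`(2n−1)(2n−3)·I(q²·(∑ uᵢXᵢ)^{2n−4}) = (b+2n−2)(b+2n−4)·λ·(∑ uᵢ²)^{n−2}` for every `u`. -/
theorem lambda_q_sq_computation (b n : ℕ) (hb : 1 ≤ b) (hn : 2 ≤ n) (lam : ℂ)
    (I : MvPolynomial (Fin b) ℂ →ₗ[ℂ] ℂ)
    (hI : ∀ u : Fin b → ℂ,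
      I ((∑ i, C (u i) * X i) ^ (2 * n)) = lam * (∑ i, (u i) ^ 2) ^ n) :
    ∀ u : Fin b → ℂ,
      ((2 * n : ℕ) - 1 : ℂ) * ((2 * n : ℕ) - 3 : ℂ) *
          I ((∑ i, (X i) ^ 2) ^ 2 * (∑ i, C (u i) * X i) ^ (2 * n - 4)) =
        ((b : ℂ) + 2 * n - 2) * ((b : ℂ) + 2 * n - 4) * lam *
          (∑ i, (u i) ^ 2) ^ (n - 2) := by
  obtain ⟨k, rfl⟩ : ∃ k, n = k + 2 := ⟨n - 2, by omega⟩
  intro u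
  -- the linear form with polynomial coefficients
  set A := MvPolynomial (Fin b) ℂ
  set L : MvPolynomial (Fin b) A := ∑ i, C (X i) * X i with hL
  set q : A := ∑ i, (X i) ^ 2 with hq
  -- Step 1: the polynomial identity from the Fujiki relation
  have haevalL : ∀ v : Fin b → ℂ, aeval (fun i => (C (v i) : A)) L = ∑ i, C (v i) * X i := by
    intro v
    rw [hL, map_sum]
    refine Finset.sum_congr rfl fun i _ => ?_
    rw [map_mul, aeval_C, aeval_X]
    rw [show (algebraMap A A) (X i) = X i from rfl, mul_comm]
  have step1 : fujikiPhi I (L ^ (2 * (k + 2))) = C lam * q ^ (k + 2) := by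
    apply MvPolynomial.funext
    intro v
    rw [eval_fujikiPhi, map_pow, haevalL, hI v]
    rw [hq]
    simp [eval_C]
  -- Step 2: apply the Laplacian twice
  have step2 : fujikiPhi I (fujikiLap (fujikiLap (L ^ (2 * (k + 2)))))
      = fujikiLap (fujikiLap (C lam * q ^ (k + 2))) := by
    rw [← fujikiLap_fujikiPhi, ← fujikiLap_fujikiPhi, step1]
  -- compute the left side
  have lhs_eq : fujikiLap (fujikiLap (L ^ (2 * (k + 2))))
      = ((2 * k + 4) * (2 * k + 3)) • (((2 * k + 2) * (2 * k + 1)) •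
          (C q * (C q * L ^ (2 * k)))) := by
    have e : 2 * (k + 2) = (2 * k + 2) + 2 := by ring
    rw [hL, e, fujikiLap_linpow, fujikiLap_nsmul, fujikiLap_C_mul, fujikiLap_linpow]
    rw [← hq]
    rw [mul_smul_comm]
  -- compute the right side
  have rhs_eq : fujikiLap (fujikiLap (C lam * q ^ (k + 2)))
      = C lam * ((2 * (k + 2) * (b + 2 * (k + 1))) • ((2 * (k + 1) * (b + 2 * k)) • q ^ k)) := by
    have e : k + 2 = (k + 1) + 1 := rfl
    rw [hq, e, fujikiLap_C_mul, fujikiLap_Qpow, fujikiLap_C_mul, fujikiLap_nsmul, fujikiLap_Qpow]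
  rw [lhs_eq, rhs_eq] at step2
  -- evaluate at u
  have harg : aeval (fun i => (C (u i) : A)) (C q * (C q * L ^ (2 * k)))
      = q ^ 2 * (∑ i, C (u i) * X i) ^ (2 * k) := by
    rw [map_mul, map_mul, map_pow, haevalL]
    rw [show (aeval fun i => (C (u i) : A)) (C q) = q from by
      rw [aeval_C]; rfl]
    rw [← mul_assoc, ← sq]
  have hevalC : eval u (C lam : A) = lam := eval_C ..
  have hevalq : eval u ((q : A) ^ k) = (∑ i, (u i) ^ 2) ^ k := by
    rw [hq, map_pow, map_sum]
    simp
  have hval := congrArg (eval u) step2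
  simp only [map_nsmul, map_mul] at hval
  rw [eval_fujikiPhi, harg, hevalC, hevalq] at hval
  -- now hval is an identity in ℂ; massage it into the goal
  have e1 : (k + 2) - 2 = k := rfl
  have e2 : 2 * (k + 2) - 4 = 2 * k := by omega
  rw [e1, e2]
  simp only [nsmul_eq_mul] at hval
  push_cast at hval ⊢
  have hc : (4 : ℂ) * ((k : ℂ) + 2) * ((k : ℂ) + 1) ≠ 0 := by
    have h1 : ((k : ℂ) + 2) ≠ 0 := by
      exact_mod_cast (Nat.cast_ne_zero (R := ℂ)).mpr (by omega : k + 2 ≠ 0)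
    have h2 : ((k : ℂ) + 1) ≠ 0 := by
      exact_mod_cast (Nat.cast_ne_zero (R := ℂ)).mpr (by omega : k + 1 ≠ 0)
    norm_num [h1, h2, mul_ne_zero]
  apply mul_left_cancel₀ hc
  linear_combination hval
end

section
/- Let b ≥ 2 and n ≥ 2 be integers, let λ ∈ ℂ, and let I : MvPolynomial (Fin b) ℂ →ₗ[ℂ] ℂ be a ℂ-linear functional satisfying the Fujiki relation with constant λ in degree 2n, i.e. I((∑_i u_i X_i)^{2n}) = λ·(∑_i u_i²)^n for every u : Fin b → ℂ. Then for any two distinct indices i ≠ j in Fin b, one has (2n choose 4) · I(X_i⁴ · X_j^{2n−4}) = (n choose 2)·λ. (This is the polarization identity (2n choose 4) ∫_M e_i⁴ e_j^{2n−4} = λ (n choose 2), obtained by comparing coefficients of t^{2n−4} in ∫_M (e_i + t e_j)^{2n} = λ(1+t²)^n.) -/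
open MvPolynomial

/-- The polarization identity `(2n choose 4)·∫ eᵢ⁴e_j^{2n−4} = λ·(n choose 2)`:
if a linear functional `I` satisfies the Fujiki relation with constant `λ` in degree `2n`,
then for distinct `i ≠ j`, `(2n choose 4)·I(Xᵢ⁴·X_j^{2n−4}) = (n choose 2)·λ`. -/
theorem polarization_choose_four (b n : ℕ) (hb : 2 ≤ b) (hn : 2 ≤ n) (lam : ℂ)
    (I : MvPolynomial (Fin b) ℂ →ₗ[ℂ] ℂ)
    (hI : ∀ u : Fin b → ℂ,
      I ((∑ i, C (u i) * X i) ^ (2 * n)) = lam * (∑ i, (u i) ^ 2) ^ n) :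
    ∀ i j : Fin b, i ≠ j →
      (Nat.choose (2 * n) 4 : ℂ) * I ((X i) ^ 4 * (X j) ^ (2 * n - 4)) =
        (Nat.choose n 2 : ℂ) * lam := by
  intro i j hij
  set N := 2 * n with hN
  have hN4 : 4 ≤ N := by omega
  set a : ℕ → ℂ := fun k => I (X i ^ (N - k) * X j ^ k) with ha
  set p : Polynomial ℂ := ∑ k ∈ Finset.range (N + 1),
      Polynomial.monomial k ((N.choose k : ℂ) * a k) with hp
  set q : Polynomial ℂ := Polynomial.C lam * (1 + Polynomial.X ^ 2) ^ n with hq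
  have hpq : p = q := by
    apply Polynomial.funext
    intro t
    have key : (∑ m, C ((fun m => if m = i then 1 else if m = j then t else 0) m) * X m :
        MvPolynomial (Fin b) ℂ) = C t * X j + X i := by
      have h1 : ∀ m : Fin b,
          C ((fun m => if m = i then (1:ℂ) else if m = j then t else 0) m) * X m
            = (if m = j then C t * X j else 0) + (if m = i then (X i : MvPolynomial (Fin b) ℂ) else 0) := by
        intro m
        by_cases h1 : m = i
        · subst h1
          simp [hij]
        · by_cases h2 : m = j
          · subst h2
            simp [h1]
          · simp [h1, h2]
      rw [Finset.sum_congr rfl (fun m _ => h1 m), Finset.sum_add_distrib,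
        Finset.sum_ite_eq', Finset.sum_ite_eq']
      simp
    have key2 : (∑ m, ((fun m => if m = i then 1 else if m = j then t else 0) m) ^ 2 : ℂ)
        = 1 + t ^ 2 := by
      have h1 : ∀ m : Fin b,
          ((fun m => if m = i then (1:ℂ) else if m = j then t else 0) m) ^ 2
            = (if m = i then (1:ℂ) else 0) + (if m = j then t ^ 2 else 0) := by
        intro m
        by_cases h1 : m = i
        · subst h1
          simp [hij]
        · by_cases h2 : m = j
          · subst h2
            simp [h1]
          · simp [h1, h2]
      rw [Finset.sum_congr rfl (fun m _ => h1 m), Finset.sum_add_distrib,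
        Finset.sum_ite_eq', Finset.sum_ite_eq']
      simp
    have hu := hI (fun m => if m = i then 1 else if m = j then t else 0)
    rw [key, key2] at hu
    have hterm : ((C t * X j + X i) : MvPolynomial (Fin b) ℂ) ^ N
        = ∑ k ∈ Finset.range (N + 1),
            (t ^ k * (N.choose k : ℂ)) • (X i ^ (N - k) * X j ^ k) := by
      rw [add_pow]
      refine Finset.sum_congr rfl fun k _ => ?_
      rw [smul_eq_C_mul, mul_pow, ← C_pow, map_mul,
        map_natCast (C : ℂ →+* MvPolynomial (Fin b) ℂ)]
      ring
    rw [hterm, map_sum] at hu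
    simp only [map_smul, smul_eq_mul] at hu
    have hevp : p.eval t = ∑ k ∈ Finset.range (N + 1),
        t ^ k * (N.choose k : ℂ) * a k := by
      rw [hp, Polynomial.eval_finset_sum]
      refine Finset.sum_congr rfl fun k _ => ?_
      simp only [Polynomial.eval_monomial]
      ring
    have hevq : q.eval t = lam * (1 + t ^ 2) ^ n := by
      simp [hq]
    rw [hevp, hevq, ← hu]
  have hc := congrArg (fun r => Polynomial.coeff r (N - 4)) hpq
  simp only [hp, hq] at hc
  rw [Polynomial.finset_sum_coeff] at hc
  simp only [Polynomial.coeff_monomial] at hc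
  rw [Finset.sum_ite_eq' (Finset.range (N + 1))
    (N - 4) (fun k => (N.choose k : ℂ) * a k)] at hc
  have hmem : N - 4 ∈ Finset.range (N + 1) := by
    simp
  rw [if_pos hmem] at hc
  -- compute q coefficient
  have hqc : (Polynomial.C lam * (1 + Polynomial.X ^ 2) ^ n).coeff (N - 4)
      = lam * (n.choose 2 : ℂ) := by
    rw [Polynomial.coeff_C_mul, add_pow]
    rw [Polynomial.finset_sum_coeff]
    have : ∀ k ∈ Finset.range (n + 1),
        ((1:Polynomial ℂ) ^ k * (Polynomial.X ^ 2) ^ (n - k) * (n.choose k : Polynomial ℂ)).coeff (N - 4)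
          = if N - 4 = 2 * (n - k) then (n.choose k : ℂ) else 0 := by
      intro k _
      rw [one_pow, one_mul, ← pow_mul, ← Polynomial.C_eq_natCast, mul_comm, Polynomial.coeff_C_mul,
        Polynomial.coeff_X_pow]
      simp [mul_ite]
    rw [Finset.sum_congr rfl this, Finset.sum_eq_single 2]
    · rw [if_pos (by omega)]
    · intro k hk hk2
      rw [if_neg]
      simp at hk
      omega
    · intro h
      simp at h
      omega
  rw [hqc] at hc
  have h4 : N - (N - 4) = 4 := by omega
  have hch : N.choose (N - 4) = N.choose 4 := Nat.choose_symm hN4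
  simp only [ha, h4, hch] at hc
  rw [hc]
  ring
end

section
/- Let b ≥ 1 and n ≥ 2 be integers, let λ be a positive real number, and let I : MvPolynomial (Fin b) ℂ →ₗ[ℂ] ℂ be a ℂ-linear functional satisfying the Fujiki relation with constant λ in degree 2n, i.e. I((∑_i u_i X_i)^{2n}) = λ·(∑_i u_i²)^n for every u : Fin b → ℂ. Set q := ∑_i X_i² and s := ∑_i X_i, and let P, R, S be the real numbers with (P : ℂ) = I(q·s^{2n−2}), (R : ℂ) = I(q²·s^{2n−4}), and (S : ℂ) = I(s^{2n}) (such real numbers exist and are uniquely determined by the Fujiki relation). Let A and B be real numbers satisfying the inequality (2n−1)·(A+2B)·P² ≥ (2n−3)·A·R·S. Then A ≥ −(b+2n−2)·B. (This is the algebraic derivation of the theorem b_{Θ^n}(M) ≥ −(b₂+2n−2)·b_{Θ^{n−2}Θ₂}(M) from the Hodge–Riemann inequality (2n−1)(b_{Θ^n}+2b_{Θ^{n−2}Θ₂})(∫ q u^{2n−2})² ≥ (2n−3) b_{Θ^n} (∫ q² u^{2n−4})(∫ u^{2n}) evaluated at u = e_1 + ⋯ + e_{b₂}.) -/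
set_option maxHeartbeats 1000000


open Polynomial in
lemma sum_eval_ext {N : ℕ} (a : ℕ → ℂ) (g : Polynomial ℂ)
    (h : ∀ t : ℂ, ∑ m ∈ Finset.range (N+1), a m * t ^ m = g.eval t)
    {k : ℕ} (hk : k < N + 1) :
    a k = g.coeff k := by
  have hp : (∑ m ∈ Finset.range (N+1), Polynomial.C (a m) * Polynomial.X ^ m) = g := by
    apply Polynomial.funext
    intro t
    rw [Polynomial.eval_finset_sum, ← h t]
    simp
  rw [← hp, Polynomial.finset_sum_coeff]
  simp only [Polynomial.coeff_C_mul, Polynomial.coeff_X_pow]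
  rw [Finset.sum_eq_single k]
  · simp
  · intro m _ hm; simp [Ne.symm hm]
  · intro hk'; exact absurd (Finset.mem_range.2 hk) hk'

open Polynomial in
lemma mul_quad_coeff (p : Polynomial ℂ) (γ δ : ℂ) :
    (p * (X^2 + C δ * X + C γ)).coeff 0 = p.coeff 0 * γ ∧
    (p * (X^2 + C δ * X + C γ)).coeff 1 = p.coeff 0 * δ + p.coeff 1 * γ ∧
    (p * (X^2 + C δ * X + C γ)).coeff 2 = p.coeff 0 + p.coeff 1 * δ + p.coeff 2 * γ := by
  refine ⟨?_, ?_, ?_⟩ <;>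
  · rw [Polynomial.coeff_mul]
    rw [Finset.Nat.sum_antidiagonal_eq_sum_range_succ_mk]
    simp [Finset.sum_range_succ, Polynomial.coeff_X, Polynomial.coeff_C]
    try ring

open Polynomial in
lemma quad_pow_coeff (γ δ : ℂ) (m : ℕ) :
    ((X^2 + C δ * X + C γ : Polynomial ℂ)^m).coeff 0 = γ^m ∧
    ((X^2 + C δ * X + C γ : Polynomial ℂ)^(m+1)).coeff 1 = (m+1 : ℂ) * δ * γ^m ∧
    ((X^2 + C δ * X + C γ : Polynomial ℂ)^(m+2)).coeff 2 =
      ((m+2).choose 2 : ℂ) * δ^2 * γ^m + (m+2 : ℂ) * γ^(m+1) := by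
  induction m with
  | zero =>
    refine ⟨by simp, ?_, ?_⟩
    · rw [pow_one]; simp [Polynomial.coeff_C]
    · rw [pow_two]
      obtain ⟨h0, h1, h2⟩ := mul_quad_coeff (X^2 + C δ * X + C γ) γ δ
      rw [h2]; simp [Polynomial.coeff_C]; ring
  | succ m ih =>
    obtain ⟨i0, i1, i2⟩ := ih
    have e0 : ((X^2 + C δ * X + C γ : Polynomial ℂ)^(m+1)).coeff 0 = γ^(m+1) := by
      rw [pow_succ]
      exact (mul_quad_coeff _ γ δ).1.trans (by rw [i0]; ring)
    refine ⟨e0, ?_, ?_⟩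
    · rw [pow_succ]
      obtain ⟨h0, h1, h2⟩ := mul_quad_coeff ((X^2 + C δ * X + C γ)^(m+1)) γ δ
      rw [h1, e0, i1]; push_cast; ring
    · rw [pow_succ]
      obtain ⟨h0, h1, h2⟩ := mul_quad_coeff ((X^2 + C δ * X + C γ)^(m+2)) γ δ
      have e0' : ((X^2 + C δ * X + C γ : Polynomial ℂ)^(m+2)).coeff 0 = γ^(m+2) := by
        rw [pow_succ]
        exact (mul_quad_coeff _ γ δ).1.trans (by rw [e0]; ring)
      have e1' : ((X^2 + C δ * X + C γ : Polynomial ℂ)^(m+2)).coeff 1 = (m+2 : ℂ) * δ * γ^(m+1) := by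
        rw [pow_succ]
        obtain ⟨g0, g1, g2⟩ := mul_quad_coeff ((X^2 + C δ * X + C γ)^(m+1)) γ δ
        rw [g1, e0, i1]; push_cast; ring
      rw [h2, e0', e1', i2]
      have hc : ((m+3).choose 2 : ℂ) = ((m+2).choose 2 : ℂ) + (m+2 : ℂ) := by
        have : (m+3).choose 2 = (m+2).choose 2 + (m+2) := by
          simp [Nat.choose_succ_succ, Nat.choose_one_right]; ring
        rw [this]; push_cast; ring
      have h3 : ((m+1+2).choose 2 : ℂ) = ((m+2).choose 2 : ℂ) + (m+2 : ℂ) := hc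
      rw [h3]
      push_cast
      ring
open Polynomial in
lemma quad_pow_coeff_two (γ δ : ℂ) (m : ℕ) :
    ((X^2 + C δ * X + C γ : Polynomial ℂ)^m).coeff 2 =
      (m.choose 2 : ℂ) * δ^2 * γ^(m-2) + (m : ℂ) * γ^(m-1) := by
  match m with
  | 0 => simp [Polynomial.coeff_one]
  | 1 => rw [pow_one]; simp [Polynomial.coeff_C]
  | (k+2) =>
    rw [(quad_pow_coeff γ δ k).2.2]
    norm_num

open Polynomial in
lemma quad_pow_coeff_zero (γ δ : ℂ) (m : ℕ) :
    ((X^2 + C δ * X + C γ : Polynomial ℂ)^m).coeff 0 = γ^m :=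
  (quad_pow_coeff γ δ m).1

-- binomial expansion with C-coefficients pulled out
lemma expandC {σ : Type*} (y z : MvPolynomial σ ℂ) (t : ℂ) (N : ℕ) :
    (y + MvPolynomial.C t * z)^N =
      ∑ m ∈ Finset.range (N+1),
        MvPolynomial.C ((N.choose m : ℂ) * t^m) * (z^m * y^(N-m)) := by
  rw [add_comm y, add_pow]
  refine Finset.sum_congr rfl fun m _ => ?_
  rw [mul_pow, ← MvPolynomial.C_pow, MvPolynomial.C_mul, MvPolynomial.C_eq_coe_nat]
  ring

open MvPolynomial

/-- The algebraic derivation of `b_{Θ^n}(M) ≥ −(b₂+2n−2)·b_{Θ^{n−2}Θ₂}(M)` from the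
Hodge–Riemann inequality evaluated at `u = e₁ + ⋯ + e_{b₂}`: if `I` satisfies the Fujiki
relation with positive real constant `λ` in degree `2n`, `P`, `R`, `S` are the real values
of `I(q·s^{2n−2})`, `I(q²·s^{2n−4})`, `I(s^{2n})` (with `q = ∑ Xᵢ²`, `s = ∑ Xᵢ`), and real
numbers `A`, `B` satisfy `(2n−1)(A+2B)P² ≥ (2n−3)·A·R·S`, then `A ≥ −(b+2n−2)·B`. -/
theorem betti_bound_inequality (b n : ℕ) (hb : 1 ≤ b) (hn : 2 ≤ n) (lam : ℝ)
    (hlam : 0 < lam)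
    (I : MvPolynomial (Fin b) ℂ →ₗ[ℂ] ℂ)
    (hI : ∀ u : Fin b → ℂ,
      I ((∑ i, C (u i) * X i) ^ (2 * n)) = (lam : ℂ) * (∑ i, (u i) ^ 2) ^ n)
    (P R S : ℝ)
    (hP : (P : ℂ) = I ((∑ i, (X i) ^ 2) * (∑ i, X i) ^ (2 * n - 2)))
    (hR : (R : ℂ) = I ((∑ i, (X i) ^ 2) ^ 2 * (∑ i, X i) ^ (2 * n - 4)))
    (hS : (S : ℂ) = I ((∑ i, X i) ^ (2 * n)))
    (A B : ℝ)
    (hAB : ((2 * n : ℕ) - 1 : ℝ) * (A + 2 * B) * P ^ 2 ≥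
      ((2 * n : ℕ) - 3 : ℝ) * A * R * S) :
    A ≥ -((b : ℝ) + 2 * n - 2) * B := by
  classical
  set s : MvPolynomial (Fin b) ℂ := ∑ i, X i with hs
  set q : MvPolynomial (Fin b) ℂ := ∑ i, (X i)^2 with hq
  -- Fujiki at u = 1 + t e_j
  have key1 : ∀ (j : Fin b) (t : ℂ),
      I ((s + C t * X j) ^ (2*n)) = (lam:ℂ) * ((b:ℂ) + (2*t + t^2))^n := by
    intro j t
    have hu := hI (fun i => 1 + (if i = j then t else 0))
    have h1 : (∑ i, C ((1:ℂ) + (if i = j then t else 0)) * X i : MvPolynomial (Fin b) ℂ)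
        = s + C t * X j := by
      rw [show (∑ i, (C ((1:ℂ) + (if i = j then t else 0)) * X i) : MvPolynomial (Fin b) ℂ)
          = ∑ i, (X i + if i = j then C t * X i else 0) from
        Finset.sum_congr rfl fun i _ => by
          split_ifs with h <;> simp [MvPolynomial.C_add] <;> ring]
      rw [Finset.sum_add_distrib, Finset.sum_ite_eq' Finset.univ j (fun i => C t * X i)]
      simp [hs]
    have h2 : (∑ i : Fin b, ((1:ℂ) + (if i = j then t else 0))^2) = (b:ℂ) + (2*t + t^2) := by
      rw [show (∑ i : Fin b, ((1:ℂ) + (if i = j then t else 0))^2)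
          = ∑ i : Fin b, ((1:ℂ) + if i = j then 2*t + t^2 else 0) from
        Finset.sum_congr rfl fun i _ => by split_ifs <;> ring]
      rw [Finset.sum_add_distrib, Finset.sum_ite_eq' Finset.univ j (fun _ => 2*t + t^2)]
      simp [mul_comm]
    rw [h1, h2] at hu
    exact hu
  -- Fujiki at u = 1 + t e_j + r e_k, k ≠ j
  have key2 : ∀ (j k : Fin b), k ≠ j → ∀ (t r : ℂ),
      I ((s + C t * X j + C r * X k) ^ (2*n))
        = (lam:ℂ) * ((b:ℂ) + (2*t + t^2) + (2*r + r^2))^n := by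
    intro j k hkj t r
    have hu := hI (fun i => 1 + (if i = j then t else 0) + (if i = k then r else 0))
    have h1 : (∑ i, C ((1:ℂ) + (if i = j then t else 0) + (if i = k then r else 0)) * X i
          : MvPolynomial (Fin b) ℂ)
        = s + C t * X j + C r * X k := by
      rw [show (∑ i, (C ((1:ℂ) + (if i = j then t else 0) + (if i = k then r else 0)) * X i)
            : MvPolynomial (Fin b) ℂ)
          = ∑ i, (X i + (if i = j then C t * X i else 0) + (if i = k then C r * X i else 0)) from
        Finset.sum_congr rfl fun i _ => by
          split_ifs with h h' <;> simp [MvPolynomial.C_add] <;> ring]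
      rw [Finset.sum_add_distrib, Finset.sum_add_distrib,
        Finset.sum_ite_eq' Finset.univ j (fun i => C t * X i),
        Finset.sum_ite_eq' Finset.univ k (fun i => C r * X i)]
      simp [hs]
    have h2 : (∑ i : Fin b, ((1:ℂ) + (if i = j then t else 0) + (if i = k then r else 0))^2)
        = (b:ℂ) + (2*t + t^2) + (2*r + r^2) := by
      rw [show (∑ i : Fin b, ((1:ℂ) + (if i = j then t else 0) + (if i = k then r else 0))^2)
          = ∑ i : Fin b, ((1:ℂ) + (if i = j then 2*t + t^2 else 0)
              + (if i = k then 2*r + r^2 else 0)) from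
        Finset.sum_congr rfl fun i _ => by
          by_cases h : i = j <;> by_cases h' : i = k
          · exact absurd (h'.symm.trans h) hkj
          all_goals simp [h, h', hkj, Ne.symm hkj]; try ring]
      rw [Finset.sum_add_distrib, Finset.sum_add_distrib,
        Finset.sum_ite_eq' Finset.univ j (fun _ => 2*t + t^2),
        Finset.sum_ite_eq' Finset.univ k (fun _ => 2*r + r^2)]
      simp [mul_comm]
    rw [h1, h2] at hu
    exact hu
  -- expansion of I(w * (y + C t z)^N)
  have Iexp : ∀ (w y z : MvPolynomial (Fin b) ℂ) (t : ℂ) (N : ℕ),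
      I (w * (y + C t * z)^N)
        = ∑ m ∈ Finset.range (N+1), ((N.choose m : ℂ) * t^m) * I (w * (z^m * y^(N-m))) := by
    intro w y z t N
    rw [expandC, Finset.mul_sum, map_sum]
    refine Finset.sum_congr rfl fun m _ => ?_
    rw [show w * (MvPolynomial.C ((N.choose m : ℂ) * t^m) * (z^m * y^(N-m)))
        = ((N.choose m : ℂ) * t^m) • (w * (z^m * y^(N-m))) by
          rw [MvPolynomial.smul_eq_C_mul]; ring]
    rw [map_smul, smul_eq_mul]
  have Isum : ∀ (w y : MvPolynomial (Fin b) ℂ) (N m : ℕ),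
      (∑ j, I (w * ((X j)^m * y^(N-m)))) = I (w * ((∑ j, (X j)^m) * y^(N-m))) := by
    intro w y N m
    rw [Finset.sum_mul, Finset.mul_sum, map_sum]
  have hcard : (Finset.univ : Finset (Fin b)).card = b := by simp
  -- the value of S
  have ESc : (S:ℂ) = (lam:ℂ) * (b:ℂ)^n := by
    rw [hS]
    have hu := hI (fun _ => 1)
    simp only [map_one, one_mul, one_pow, Finset.sum_const, hcard, nsmul_eq_mul, mul_one] at hu
    rw [← hs] at hu
    exact hu
  have hn1 : 2 < 2*n + 1 := by omega
  -- the value of P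
  have EPc : ((2*n).choose 2 : ℂ) * (P:ℂ)
      = (lam:ℂ) * b * (((n.choose 2 : ℕ):ℂ) * 2^2 * (b:ℂ)^(n-2) + (n:ℂ) * (b:ℂ)^(n-1)) := by
    have hfun : ∀ t : ℂ, ∑ m ∈ Finset.range (2*n+1),
        (((2*n).choose m : ℂ) * I ((∑ j, (X j)^m) * s^(2*n - m))) * t^m
        = Polynomial.eval t (Polynomial.C ((lam:ℂ) * b) *
            (Polynomial.X^2 + Polynomial.C (2:ℂ) * Polynomial.X + Polynomial.C (b:ℂ))^n) := by
      intro t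
      have h2 : ∑ j : Fin b, I ((1:MvPolynomial (Fin b) ℂ) * (s + C t * X j)^(2*n))
          = ∑ m ∈ Finset.range (2*n+1),
              (((2*n).choose m : ℂ) * I ((∑ j, (X j)^m) * s^(2*n - m))) * t^m := by
        calc ∑ j : Fin b, I ((1:MvPolynomial (Fin b) ℂ) * (s + C t * X j)^(2*n))
            = ∑ j : Fin b, ∑ m ∈ Finset.range (2*n+1),
                (((2*n).choose m : ℂ) * t^m) * I (1 * ((X j)^m * s^(2*n-m))) :=
              Finset.sum_congr rfl fun j _ => Iexp 1 s (X j) t (2*n)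
          _ = ∑ m ∈ Finset.range (2*n+1), ∑ j : Fin b,
                (((2*n).choose m : ℂ) * t^m) * I (1 * ((X j)^m * s^(2*n-m))) := Finset.sum_comm
          _ = _ := by
              refine Finset.sum_congr rfl fun m _ => ?_
              rw [← Finset.mul_sum, Isum 1 s (2*n) m, one_mul]
              ring
      rw [← h2]
      have h1 : ∑ j : Fin b, I ((1:MvPolynomial (Fin b) ℂ) * (s + C t * X j)^(2*n))
          = (b:ℂ) * ((lam:ℂ) * ((b:ℂ) + (2*t + t^2))^n) := by
        simp only [one_mul, key1, Finset.sum_const, hcard, nsmul_eq_mul]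
      rw [h1]
      simp only [Polynomial.eval_mul, Polynomial.eval_pow, Polynomial.eval_add,
        Polynomial.eval_C, Polynomial.eval_X]
      ring_nf
    have h3 := sum_eval_ext (fun m => ((2*n).choose m : ℂ) * I ((∑ j, (X j)^m) * s^(2*n - m)))
      _ hfun hn1
    rw [Polynomial.coeff_C_mul, quad_pow_coeff_two] at h3
    rw [← hq, ← hP] at h3
    exact h3
  -- step C1
  have hC1 : ∀ (j : Fin b) (t : ℂ),
      ((2*n).choose 2 : ℂ) * I (q * (s + C t * X j)^(2*n-2))
        = (lam:ℂ) * ((n:ℂ) * ((b:ℂ) + 2*n - 2)) * ((b:ℂ) + (2*t + t^2))^(n-1) := by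
    intro j t
    have hfun : ∀ r : ℂ, ∑ m ∈ Finset.range (2*n+1),
        (((2*n).choose m : ℂ) * I ((∑ k, (X k)^m) * (s + C t * X j)^(2*n - m))) * r^m
        = Polynomial.eval r (Polynomial.C ((lam:ℂ)) *
            (Polynomial.C ((b:ℂ)-1) * (Polynomial.X^2 + Polynomial.C (2:ℂ) * Polynomial.X
                + Polynomial.C ((b:ℂ) + (2*t + t^2)))^n
             + (Polynomial.X^2 + Polynomial.C (2+2*t) * Polynomial.X
                + Polynomial.C ((b:ℂ) + (2*t + t^2)))^n)) := by
      intro r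
      have h2 : ∑ k : Fin b, I ((1:MvPolynomial (Fin b) ℂ) * ((s + C t * X j) + C r * X k)^(2*n))
          = ∑ m ∈ Finset.range (2*n+1),
              (((2*n).choose m : ℂ) * I ((∑ k, (X k)^m) * (s + C t * X j)^(2*n - m))) * r^m := by
        calc ∑ k : Fin b, I ((1:MvPolynomial (Fin b) ℂ) * ((s + C t * X j) + C r * X k)^(2*n))
            = ∑ k : Fin b, ∑ m ∈ Finset.range (2*n+1),
                (((2*n).choose m : ℂ) * r^m) * I (1 * ((X k)^m * (s + C t * X j)^(2*n-m))) :=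
              Finset.sum_congr rfl fun k _ => Iexp 1 (s + C t * X j) (X k) r (2*n)
          _ = ∑ m ∈ Finset.range (2*n+1), ∑ k : Fin b,
                (((2*n).choose m : ℂ) * r^m) * I (1 * ((X k)^m * (s + C t * X j)^(2*n-m))) :=
              Finset.sum_comm
          _ = _ := by
              refine Finset.sum_congr rfl fun m _ => ?_
              rw [← Finset.mul_sum, Isum 1 (s + C t * X j) (2*n) m, one_mul]
              ring
      rw [← h2]
      have h1 : ∑ k : Fin b, I ((1:MvPolynomial (Fin b) ℂ) * ((s + C t * X j) + C r * X k)^(2*n))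
          = ((b:ℂ)-1) * ((lam:ℂ) * (((b:ℂ) + (2*t + t^2)) + (2*r + r^2))^n)
            + (lam:ℂ) * ((b:ℂ) + (2*(t+r) + (t+r)^2))^n := by
        simp only [one_mul]
        rw [← Finset.sum_erase_add _ _ (Finset.mem_univ j)]
        congr 1
        · rw [Finset.sum_congr rfl (fun k hk => key2 j k (Finset.ne_of_mem_erase hk) t r),
            Finset.sum_const, Finset.card_erase_of_mem (Finset.mem_univ j), hcard,
            nsmul_eq_mul, Nat.cast_sub hb]
          push_cast
          ring
        · rw [show s + C t * X j + C r * X j = s + C (t+r) * X j by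
              rw [MvPolynomial.C_add]; ring]
          exact key1 j (t+r)
      rw [h1]
      simp only [Polynomial.eval_mul, Polynomial.eval_pow, Polynomial.eval_add,
        Polynomial.eval_C, Polynomial.eval_X]
      ring_nf
    have h3 := sum_eval_ext (fun m =>
        ((2*n).choose m : ℂ) * I ((∑ k, (X k)^m) * (s + C t * X j)^(2*n - m))) _ hfun hn1
    rw [Polynomial.coeff_C_mul, Polynomial.coeff_add, Polynomial.coeff_C_mul,
      quad_pow_coeff_two, quad_pow_coeff_two] at h3
    rw [← hq] at h3
    rw [h3]
    have hpow : ((b:ℂ) + (2*t + t^2))^(n-2) * ((b:ℂ) + (2*t + t^2))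
        = ((b:ℂ) + (2*t + t^2))^(n-1) := by
      rw [← pow_succ]; congr 1; omega
    have hch : ((n.choose 2 : ℕ):ℂ) = (n:ℂ)*((n:ℂ)-1)/2 := Nat.cast_choose_two ℂ n
    rw [hch]
    linear_combination ((lam:ℂ) * 2 * (n:ℂ) * ((n:ℂ)-1)) * hpow
  -- step C2 : the value of R
  have hn2 : 2 < 2*n - 2 + 1 := by omega
  have ERc : ((2*n).choose 2 : ℂ) * (((2*n-2).choose 2 : ℂ) * (R:ℂ))
      = (lam:ℂ) * ((n:ℂ)*((b:ℂ)+2*n-2)) * (b:ℂ)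
        * ((((n-1).choose 2 : ℕ):ℂ) * 2^2 * (b:ℂ)^(n-1-2) + ((n-1:ℕ):ℂ) * (b:ℂ)^(n-1-1)) := by
    have hfun : ∀ t : ℂ, ∑ m ∈ Finset.range (2*n-2+1),
        (((2*n).choose 2 : ℂ) * (((2*n-2).choose m : ℂ)
            * I (q * ((∑ j, (X j)^m) * s^(2*n-2 - m))))) * t^m
        = Polynomial.eval t (Polynomial.C ((lam:ℂ) * ((n:ℂ)*((b:ℂ)+2*n-2)) * b) *
            (Polynomial.X^2 + Polynomial.C (2:ℂ) * Polynomial.X + Polynomial.C (b:ℂ))^(n-1)) := by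
      intro t
      have h2 : ∑ j : Fin b, I (q * (s + C t * X j)^(2*n-2))
          = ∑ m ∈ Finset.range (2*n-2+1),
              (((2*n-2).choose m : ℂ) * I (q * ((∑ j, (X j)^m) * s^(2*n-2 - m)))) * t^m := by
        calc ∑ j : Fin b, I (q * (s + C t * X j)^(2*n-2))
            = ∑ j : Fin b, ∑ m ∈ Finset.range (2*n-2+1),
                (((2*n-2).choose m : ℂ) * t^m) * I (q * ((X j)^m * s^(2*n-2-m))) :=
              Finset.sum_congr rfl fun j _ => Iexp q s (X j) t (2*n-2)
          _ = ∑ m ∈ Finset.range (2*n-2+1), ∑ j : Fin b,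
                (((2*n-2).choose m : ℂ) * t^m) * I (q * ((X j)^m * s^(2*n-2-m))) :=
              Finset.sum_comm
          _ = _ := by
              refine Finset.sum_congr rfl fun m _ => ?_
              rw [← Finset.mul_sum, Isum q s (2*n-2) m]
              ring
      calc ∑ m ∈ Finset.range (2*n-2+1),
            (((2*n).choose 2 : ℂ) * (((2*n-2).choose m : ℂ)
              * I (q * ((∑ j, (X j)^m) * s^(2*n-2 - m))))) * t^m
          = ((2*n).choose 2 : ℂ) * ∑ m ∈ Finset.range (2*n-2+1),
              (((2*n-2).choose m : ℂ) * I (q * ((∑ j, (X j)^m) * s^(2*n-2 - m)))) * t^m := by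
            rw [Finset.mul_sum]
            exact Finset.sum_congr rfl fun m _ => by ring
        _ = ((2*n).choose 2 : ℂ) * ∑ j : Fin b, I (q * (s + C t * X j)^(2*n-2)) := by rw [h2]
        _ = ∑ j : Fin b, ((2*n).choose 2 : ℂ) * I (q * (s + C t * X j)^(2*n-2)) :=
            Finset.mul_sum _ _ _
        _ = ∑ _j : Fin b, (lam:ℂ) * ((n:ℂ) * ((b:ℂ) + 2*n - 2)) * ((b:ℂ) + (2*t + t^2))^(n-1) :=
            Finset.sum_congr rfl fun j _ => hC1 j t
        _ = (b:ℂ) * ((lam:ℂ) * ((n:ℂ) * ((b:ℂ) + 2*n - 2)) * ((b:ℂ) + (2*t+t^2))^(n-1)) := by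
            rw [Finset.sum_const, hcard, nsmul_eq_mul]
        _ = _ := by
            simp only [Polynomial.eval_mul, Polynomial.eval_pow, Polynomial.eval_add,
              Polynomial.eval_C, Polynomial.eval_X]
            ring
    have h3 := sum_eval_ext (fun m => ((2*n).choose 2 : ℂ) * (((2*n-2).choose m : ℂ)
        * I (q * ((∑ j, (X j)^m) * s^(2*n-2 - m))))) _ hfun hn2
    rw [Polynomial.coeff_C_mul, quad_pow_coeff_two] at h3
    have e4 : 2*n-2-2 = 2*n-4 := by omega
    rw [e4, ← hq, show q * (q * s^(2*n-4)) = q^2 * s^(2*n-4) from by ring, ← hR] at h3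
    exact h3
  -- pass to the reals
  have rS : S = lam * (b:ℝ)^n := by exact_mod_cast ESc
  have rP : (((2*n).choose 2 : ℕ):ℝ) * P
      = lam * b * (((n.choose 2 : ℕ):ℝ) * 2^2 * (b:ℝ)^(n-2) + (n:ℝ) * (b:ℝ)^(n-1)) := by
    exact_mod_cast EPc
  have rR : (((2*n).choose 2 : ℕ):ℝ) * ((((2*n-2).choose 2 : ℕ):ℝ) * R)
      = lam * ((n:ℝ)*((b:ℝ)+2*n-2)) * (b:ℝ)
        * ((((n-1).choose 2 : ℕ):ℝ) * 2^2 * (b:ℝ)^(n-1-2) + ((n-1:ℕ):ℝ) * (b:ℝ)^(n-1-1)) := by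
    exact_mod_cast ERc
  have hβ : (1:ℝ) ≤ (b:ℝ) := by exact_mod_cast hb
  have hνn : (2:ℝ) ≤ (n:ℝ) := by exact_mod_cast hn
  have hbpos : (0:ℝ) < (b:ℝ) := by linarith
  have hx : (0:ℝ) < (b:ℝ)^(n-2) := pow_pos hbpos _
  have hbx1 : (b:ℝ)^(n-1) = (b:ℝ)^(n-2) * b := by
    rw [← pow_succ]; congr 1; omega
  have hbn : (b:ℝ)^n = (b:ℝ)^(n-2) * (b:ℝ)^2 := by
    rw [← pow_add]; congr 1; omega
  have e11 : n-1-1 = n-2 := by omega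
  have hbx3 : ((n:ℝ)-2) * ((b:ℝ)^(n-1-2) * b) = ((n:ℝ)-2) * (b:ℝ)^(n-2) := by
    rcases Nat.lt_or_ge n 3 with h|h
    · have hn2' : n = 2 := by omega
      subst hn2'
      norm_num
    · congr 1
      rw [← pow_succ]; congr 1; omega
  have A1 : (((2*n).choose 2:ℕ):ℝ) = (n:ℝ) * (2*(n:ℝ)-1) := by
    rw [Nat.cast_choose_two]; push_cast; ring
  have A2 : (((2*n-2).choose 2:ℕ):ℝ) = ((n:ℝ)-1) * (2*(n:ℝ)-3) := by
    rw [Nat.cast_choose_two, Nat.cast_sub (show 2 ≤ 2*n by omega)]; push_cast; ring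
  have A3 : ((n.choose 2:ℕ):ℝ) = (n:ℝ)*((n:ℝ)-1)/2 := Nat.cast_choose_two ℝ n
  have A4 : (((n-1).choose 2:ℕ):ℝ) = ((n:ℝ)-1)*((n:ℝ)-2)/2 := by
    rw [Nat.cast_choose_two, Nat.cast_sub (show 1 ≤ n by omega)]; push_cast; ring
  have A5 : ((n-1:ℕ):ℝ) = (n:ℝ)-1 := by
    rw [Nat.cast_sub (show 1 ≤ n by omega)]; push_cast; ring
  have hn0 : (n:ℝ) ≠ 0 := by linarith
  have fP : (2*(n:ℝ)-1) * P = lam * (b:ℝ)^(n-2) * b * ((b:ℝ) + 2*n - 2) := by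
    apply mul_left_cancel₀ hn0
    rw [A1, A3] at rP
    linear_combination rP + lam*(b:ℝ)*(n:ℝ)*hbx1
  have fR : ((2*(n:ℝ)-1) * (2*(n:ℝ)-3)) * R
      = lam * (b:ℝ)^(n-2) * ((b:ℝ)+2*n-2) * ((b:ℝ)+2*n-4) := by
    apply mul_left_cancel₀ (mul_ne_zero hn0 (show (n:ℝ)-1 ≠ 0 by linarith))
    rw [A1, A2, A4, A5, e11] at rR
    linear_combination rR + (lam*(n:ℝ)*((b:ℝ)+2*(n:ℝ)-2)*2*((n:ℝ)-1)) * hbx3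
  -- assemble
  push_cast at hAB
  have hm1 : (0:ℝ) < 2*(n:ℝ)-1 := by linarith
  have hKpos : (0:ℝ) < (b:ℝ) + 2*(n:ℝ) - 2 := by linarith
  have h0 : (2*(n:ℝ)-1) * ((2*(n:ℝ)-3)*A*R*S)
      ≤ (2*(n:ℝ)-1) * ((2*(n:ℝ)-1)*(A+2*B)*P^2) :=
    mul_le_mul_of_nonneg_left hAB hm1.le
  have h1 : A * (lam * (b:ℝ)^(n-2) * ((b:ℝ)+2*n-2) * ((b:ℝ)+2*n-4))
        * (lam * ((b:ℝ)^(n-2) * (b:ℝ)^2))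
      ≤ (A+2*B) * (lam * (b:ℝ)^(n-2) * b * ((b:ℝ)+2*n-2))^2 := by
    calc A * (lam * (b:ℝ)^(n-2) * ((b:ℝ)+2*n-2) * ((b:ℝ)+2*n-4))
          * (lam * ((b:ℝ)^(n-2) * (b:ℝ)^2))
        = (2*(n:ℝ)-1) * ((2*(n:ℝ)-3)*A*R*S) := by
          rw [← fR, ← hbn, ← rS]; ring
      _ ≤ (2*(n:ℝ)-1) * ((2*(n:ℝ)-1)*(A+2*B)*P^2) := h0
      _ = (A+2*B) * ((2*(n:ℝ)-1) * P)^2 := by ring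
      _ = (A+2*B) * (lam * (b:ℝ)^(n-2) * b * ((b:ℝ)+2*n-2))^2 := by rw [fP]
  have hq2 : (0:ℝ) < (lam*(b:ℝ)^(n-2)*b)^2 * ((b:ℝ)+2*(n:ℝ)-2) :=
    mul_pos (pow_pos (mul_pos (mul_pos hlam hx) hbpos) 2) hKpos
  have h1' : (lam*(b:ℝ)^(n-2)*b)^2 * ((b:ℝ)+2*(n:ℝ)-2) * (A*((b:ℝ)+2*(n:ℝ)-4))
      ≤ (lam*(b:ℝ)^(n-2)*b)^2 * ((b:ℝ)+2*(n:ℝ)-2) * ((A+2*B)*((b:ℝ)+2*(n:ℝ)-2)) := by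
    nlinarith [h1]
  have h2 : A*((b:ℝ)+2*(n:ℝ)-4) ≤ (A+2*B)*((b:ℝ)+2*(n:ℝ)-2) :=
    le_of_mul_le_mul_left h1' hq2
  nlinarith [h2]
end

section
/- Let n ≥ 1 and let ε : Fin (2n) × Fin (2n) → ℂ be the standard symplectic form (ε(2k,2k+1) = 1, ε(2k+1,2k) = −1 for 0 ≤ k < n, and ε(i,j) = 0 otherwise). Let Ω : Fin (2n) × Fin (2n) × Fin (2n) × Fin (2n) → ℂ satisfy the quaternionic reality condition: conj(Ω(i,j,k,l)) = ∑_{i',j',k',l'} ε(i,i')·ε(j,j')·ε(k,k')·ε(l,l')·Ω(i',j',k',l') for all i,j,k,l. Then the Θ-contraction ∑_{a,b,c,d,e,f,g,h} Ω(a,b,c,d)·Ω(e,f,g,h)·ε(a,e)·ε(b,f)·ε(c,g)·ε(d,h) equals ∑_{i,j,k,l} |Ω(i,j,k,l)|², and in particular it is a nonnegative real number. (This is the pointwise statement, used in the paper, that the integrand of the Rozansky–Witten invariant b_Θ is the squared L²-norm of the curvature tensor, whence β_Θ > 0.) -/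
/-- The standard symplectic form on `ℂ^{2n}`: `ε(2k, 2k+1) = 1`, `ε(2k+1, 2k) = −1`,
and `ε(i,j) = 0` otherwise. -/
noncomputable def eps (n : ℕ) (i j : Fin (2 * n)) : ℂ :=
  if (i : ℕ) % 2 = 0 ∧ (j : ℕ) = (i : ℕ) + 1 then 1
  else if (j : ℕ) % 2 = 0 ∧ (i : ℕ) = (j : ℕ) + 1 then -1
  else 0

lemma theta_partial_contraction_eq_mul_conj {ι : Type*} [Fintype ι] (ε : ι → ι → ℂ)
    (Om : ι × ι × ι × ι → ℂ)
    (hreal : ∀ i j k l : ι,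
      (starRingEnd ℂ) (Om (i, j, k, l)) =
        ∑ i', ∑ j', ∑ k', ∑ l', ε i i' * ε j j' * ε k k' * ε l l' * Om (i', j', k', l'))
    (a b c d : ι) :
    (∑ e, ∑ f, ∑ g, ∑ h, Om (a, b, c, d) * Om (e, f, g, h) * ε a e * ε b f * ε c g * ε d h) =
      Om (a, b, c, d) * (starRingEnd ℂ) (Om (a, b, c, d)) := by
  simp only [hreal, Finset.mul_sum]
  refine Finset.sum_congr rfl fun e _ => Finset.sum_congr rfl fun f _ =>
    Finset.sum_congr rfl fun g _ => Finset.sum_congr rfl fun h _ => by ring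

theorem theta_contraction_is_norm_sq_general (n : ℕ)
    (Om : Fin (2 * n) × Fin (2 * n) × Fin (2 * n) × Fin (2 * n) → ℂ)
    (hreal : ∀ i j k l : Fin (2 * n),
      (starRingEnd ℂ) (Om (i, j, k, l)) =
        ∑ i', ∑ j', ∑ k', ∑ l',
          eps n i i' * eps n j j' * eps n k k' * eps n l l' * Om (i', j', k', l')) :
    (∑ a, ∑ b, ∑ c, ∑ d, ∑ e, ∑ f, ∑ g, ∑ h,
        Om (a, b, c, d) * Om (e, f, g, h) *
          eps n a e * eps n b f * eps n c g * eps n d h) =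
      ((∑ i, ∑ j, ∑ k, ∑ l, ‖Om (i, j, k, l)‖ ^ 2 : ℝ) : ℂ) := by
  simp only [theta_partial_contraction_eq_mul_conj (eps n) Om hreal, Complex.mul_conj,
    ← Complex.sq_norm, Complex.ofReal_sum, Complex.ofReal_pow]

/-- The Θ-contraction of a 4-tensor `Ω` satisfying the quaternionic reality condition
equals the sum of the squared absolute values of its entries; in particular it is a
nonnegative real number. This is the pointwise statement that the integrand of the
Rozansky–Witten invariant `b_Θ` is the squared `L²`-norm of the curvature tensor. -/
theorem theta_contraction_is_norm_sq (n : ℕ) (hn : 1 ≤ n)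
    (Om : Fin (2 * n) × Fin (2 * n) × Fin (2 * n) × Fin (2 * n) → ℂ)
    (hreal : ∀ i j k l : Fin (2 * n),
      (starRingEnd ℂ) (Om (i, j, k, l)) =
        ∑ i', ∑ j', ∑ k', ∑ l',
          eps n i i' * eps n j j' * eps n k k' * eps n l l' * Om (i', j', k', l')) :
    (∑ a, ∑ b, ∑ c, ∑ d, ∑ e, ∑ f, ∑ g, ∑ h,
        Om (a, b, c, d) * Om (e, f, g, h) *
          eps n a e * eps n b f * eps n c g * eps n d h) =
      ((∑ i, ∑ j, ∑ k, ∑ l, ‖Om (i, j, k, l)‖ ^ 2 : ℝ) : ℂ) :=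
  theta_contraction_is_norm_sq_general n Om hreal
end
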